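/- Let H be a vertex-minimal finite simple graph with θ(H) ≤ 8 and χ'_s(H) > 20. Then H has no vertex of degree 1, 2, 6, or 7. -/

import Mathlib

open SimpleGraph

variable {V : Type*}

/-- Two edges are at distance at most 2 (they "see" each other): distinct and
some endpoint of one equals or is adjacent to some endpoint of the other. -/
def EdgeSees (G : SimpleGraph V) (e e' : Sym2 V) : Prop :=
  e ≠ e' ∧ ∃ a ∈ e, ∃ b ∈ e', a = b ∨ G.Adj a b

/-- `G` admits a strong `N`-edge-coloring. -/
def HasStrongColoring (G : SimpleGraph V) (N : ℕ) : Prop :=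
  ∃ f : G.edgeSet → Fin N, ∀ e e' : G.edgeSet, EdgeSees G e.val e'.val → f e ≠ f e'

/-- `G − v`: delete the vertex `v` (remove all edges incident to it). -/
def DelV (G : SimpleGraph V) (v : V) : SimpleGraph V where
  Adj a b := G.Adj a b ∧ a ≠ v ∧ b ≠ v
  symm := ⟨fun _ _ h => ⟨h.1.symm, h.2.2, h.2.1⟩⟩
  loopless := ⟨fun a h => G.loopless.irrefl a h.1⟩

/-!
An edge `xy` sees at most `(d(x) - 1)(θ - d(x)) + (d(y) - 1)(θ - d(y))` other edges: those at `x`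
or `y`, and those at a neighbour `w` of `x` (resp. `y`), where `d(w) ≤ θ - d(x)` (resp. `θ - d(y)`).
For `θ = 8` and `d(x) ∈ {1, 2, 6, 7}` this is at most `18`. So every edge at a vertex `v` of such a
degree sees fewer than `20` edges, and a strong `20`-edge-colouring of `H - v` extends greedily to
`H`.
-/

section Greedy

variable {α : Type*} {R : α → α → Prop} [Std.Symm R] {N : ℕ}

theorem exists_pairwise_insert_of_card_lt {S : Set α} {g : α → Fin N}
    (hg : S.Pairwise fun x y => R x y → g x ≠ g y) {e : α} (he : e ∉ S) (C : Finset α)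
    (hC : ∀ x ∈ S, R e x → x ∈ C) (hCN : C.card < N) :
    ∃ g' : α → Fin N, (insert e S).Pairwise fun x y => R x y → g' x ≠ g' y := by
  classical
  obtain ⟨c, -, hc⟩ := Finset.exists_mem_notMem_of_card_lt_card (s := C.image g)
    (t := Finset.univ) (by simpa using Finset.card_image_le.trans_lt hCN)
  have hupd : ∀ x ∈ S, Function.update g e c x = g x := fun x hx =>
    Function.update_of_ne (ne_of_mem_of_not_mem hx he) _ _
  have hnew : ∀ x ∈ S, R e x → c ≠ g x := fun x hx hRx h =>
    hc (h ▸ Finset.mem_image_of_mem g (hC x hx hRx))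
  refine ⟨Function.update g e c, Set.pairwise_insert.2 ⟨?_, fun x hx _ => ⟨?_, ?_⟩⟩⟩
  · intro x hx y hy hxy
    rw [hupd x hx, hupd y hy]
    exact hg hx hy hxy
  · rw [Function.update_self, hupd x hx]
    exact hnew x hx
  · rw [Function.update_self, hupd x hx]
    exact fun hRx => (hnew x hx (symm hRx)).symm

theorem exists_pairwise_union_of_card_lt {A : Set α} {g : α → Fin N}
    (hg : A.Pairwise fun x y => R x y → g x ≠ g y) (T : Finset α) (hAT : Disjoint A T)
    (C : α → Finset α) (hC : ∀ e ∈ T, ∀ x ∈ A ∪ T, R e x → x ∈ C e)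
    (hCN : ∀ e ∈ T, (C e).card < N) :
    ∃ g' : α → Fin N, (A ∪ T).Pairwise fun x y => R x y → g' x ≠ g' y := by
  classical
  refine Finset.induction_on' (motive := fun T' => ∃ g' : α → Fin N,
    (A ∪ T').Pairwise fun x y => R x y → g' x ≠ g' y) T (by simpa using ⟨g, hg⟩) ?_
  rintro e T' heT hT'T heT' ⟨g', hg'⟩
  have hT'sub : A ∪ T' ⊆ A ∪ T := Set.union_subset_union_right _ hT'T
  rw [Finset.coe_insert, Set.union_insert]
  refine exists_pairwise_insert_of_card_lt hg' ?_ (C e)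
    (fun x hx => hC e heT x (hT'sub hx)) (hCN e heT)
  rintro (heA | heT'')
  · exact hAT.notMem_of_mem_left heA heT
  · exact heT' heT''

end Greedy

namespace EdgeSees

variable {G : SimpleGraph V} {e e' : Sym2 V}

theorem symm (h : EdgeSees G e e') : EdgeSees G e' e := by
  obtain ⟨hne, a, ha, b, hb, hab⟩ := h
  exact ⟨hne.symm, b, hb, a, ha, hab.imp Eq.symm Adj.symm⟩

theorem delV {v : V} (h : EdgeSees G e e') (he : v ∉ e) (he' : v ∉ e') :
    EdgeSees (DelV G v) e e' := by
  obtain ⟨hne, a, ha, b, hb, hab⟩ := h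
  refine ⟨hne, a, ha, b, hb, hab.imp_right fun hadj => ⟨hadj, ?_, ?_⟩⟩
  · rintro rfl; exact he ha
  · rintro rfl; exact he' hb

instance (G : SimpleGraph V) : Std.Symm (EdgeSees G) := ⟨fun _ _ => EdgeSees.symm⟩

end EdgeSees

theorem mem_edgeSet_delV {G : SimpleGraph V} {v : V} {e : Sym2 V} :
    e ∈ (DelV G v).edgeSet ↔ e ∈ G.edgeSet ∧ v ∉ e := by
  induction e using Sym2.ind with
  | _ a b =>
    simp only [mem_edgeSet, Sym2.mem_iff, DelV, not_or]
    exact ⟨fun ⟨h, ha, hb⟩ => ⟨h, Ne.symm ha, Ne.symm hb⟩,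
      fun ⟨h, ha, hb⟩ => ⟨h, Ne.symm ha, Ne.symm hb⟩⟩

theorem hasStrongColoring_iff_exists_pairwise {G : SimpleGraph V} {N : ℕ} [NeZero N] :
    HasStrongColoring G N ↔
      ∃ g : Sym2 V → Fin N, G.edgeSet.Pairwise fun e e' => EdgeSees G e e' → g e ≠ g e' := by
  constructor
  · rintro ⟨f, hf⟩
    refine ⟨Function.extend Subtype.val f 0, fun e he e' he' _ hsees => ?_⟩
    have hext := Subtype.val_injective.extend_apply f 0
    simpa only [hext ⟨e, he⟩, hext ⟨e', he'⟩] using hf ⟨e, he⟩ ⟨e', he'⟩ hsees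
  · rintro ⟨g, hg⟩
    exact ⟨fun e => g e, fun e e' hsees => hg e.2 e'.2 hsees.1 hsees⟩

section Counting

variable [Fintype V] {G : SimpleGraph V} [DecidableRel G.Adj]

variable (G) in
open Classical in
noncomputable def seenEdges (e : Sym2 V) : Finset (Sym2 V) :=
  {e' ∈ G.edgeFinset | EdgeSees G e e'}

variable (G) in
theorem mem_seenEdges {e e' : Sym2 V} :
    e' ∈ seenEdges G e ↔ e' ∈ G.edgeSet ∧ EdgeSees G e e' := by
  classical
  simp [seenEdges]

theorem HasStrongColoring.of_delV {N : ℕ} [NeZero N] {v : V}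
    (hv : ∀ e ∈ G.incidenceSet v, (seenEdges G e).card < N)
    (h : HasStrongColoring (DelV G v) N) : HasStrongColoring G N := by
  classical
  obtain ⟨g, hg⟩ := hasStrongColoring_iff_exists_pairwise.1 h
  set A : Set (Sym2 V) := {e ∈ G.edgeSet | v ∉ e}
  have hA : A.Pairwise fun e e' => EdgeSees G e e' → g e ≠ g e' :=
    fun e he e' he' hne hsees =>
      hg (mem_edgeSet_delV.2 he) (mem_edgeSet_delV.2 he') hne (hsees.delV he.2 he'.2)
  have hcover : A ∪ G.incidenceFinset v = G.edgeSet := by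
    ext e
    simp only [A, coe_incidenceFinset, incidenceSet, Set.mem_union, Set.mem_ofPred_eq]
    tauto
  have hdisj : Disjoint A (G.incidenceFinset v) := by
    rw [coe_incidenceFinset, Set.disjoint_left]
    exact fun e he he' => he.2 he'.2
  refine hasStrongColoring_iff_exists_pairwise.2 ?_
  rw [← hcover]
  refine exists_pairwise_union_of_card_lt hA _ hdisj (seenEdges G)
    (fun e _ x hx hsees => (mem_seenEdges G).2 ⟨hcover ▸ hx, hsees⟩) ?_
  simpa only [mem_incidenceFinset] using hv

variable [DecidableEq V]

variable (G) in
def edgesNear (x y : V) : Finset (Sym2 V) :=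
  (G.incidenceFinset x).erase s(x, y) ∪
    ((G.neighborFinset x).erase y).biUnion fun w => (G.incidenceFinset w).erase s(x, w)

theorem mem_edgesNear_of_mem {x y : V} {e : Sym2 V} (he : e ∈ G.edgeSet) (hx : x ∈ e)
    (hne : e ≠ s(x, y)) : e ∈ edgesNear G x y :=
  Finset.mem_union_left _ <| Finset.mem_erase.2 ⟨hne, (mem_incidenceFinset _ _ _).2 ⟨he, hx⟩⟩

theorem mem_edgesNear_of_adj {x y w : V} {e : Sym2 V} (hxw : G.Adj x w) (hwy : w ≠ y)
    (he : e ∈ G.edgeSet) (hw : w ∈ e) (hx : x ∉ e) : e ∈ edgesNear G x y := by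
  refine Finset.mem_union_right _ <| Finset.mem_biUnion.2 ⟨w, ?_, ?_⟩
  · exact Finset.mem_erase.2 ⟨hwy, (mem_neighborFinset _ _ _).2 hxw⟩
  · refine Finset.mem_erase.2 ⟨?_, (mem_incidenceFinset _ _ _).2 ⟨he, hw⟩⟩
    rintro rfl
    exact hx (Sym2.mem_mk_left x w)

theorem seenEdges_subset_edgesNear {x y : V} :
    seenEdges G s(x, y) ⊆ edgesNear G x y ∪ edgesNear G y x := by
  intro e he
  obtain ⟨heG, hne, a, ha, b, hb, hab⟩ := (mem_seenEdges G).1 he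
  rw [Finset.mem_union]
  by_cases hx : x ∈ e
  · exact .inl (mem_edgesNear_of_mem heG hx hne.symm)
  by_cases hy : y ∈ e
  · exact .inr (mem_edgesNear_of_mem heG hy (Sym2.eq_swap ▸ hne.symm))
  have hadj : G.Adj a b := hab.resolve_left fun hab => by
    rcases Sym2.mem_iff.1 ha with rfl | rfl <;> simp_all
  rcases Sym2.mem_iff.1 ha with rfl | rfl
  · exact .inl (mem_edgesNear_of_adj hadj (by rintro rfl; exact hy hb) heG hb hx)
  · exact .inr (mem_edgesNear_of_adj hadj (by rintro rfl; exact hx hb) heG hb hy)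

theorem card_edgesNear_le {k : ℕ} {x y : V} (hθ : ∀ w, G.Adj x w → G.degree x + G.degree w ≤ k)
    (hxy : G.Adj x y) : (edgesNear G x y).card ≤ (G.degree x - 1) * (k - G.degree x) := by
  have hdeg_erase : ∀ {u w : V}, G.Adj u w →
      ((G.incidenceFinset u).erase s(u, w)).card = G.degree u - 1 := fun huw => by
    rw [Finset.card_erase_of_mem ((mem_incidenceFinset _ _ _).2 ⟨huw, Sym2.mem_mk_left _ _⟩),
      card_incidenceFinset_eq_degree]
  have hy : 0 < G.degree y := (G.degree_pos_iff_exists_adj y).2 ⟨x, hxy.symm⟩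
  have hk : G.degree x + 1 ≤ k := (hθ y hxy).trans' (by omega)
  have hfar : (((G.neighborFinset x).erase y).biUnion
      fun w => (G.incidenceFinset w).erase s(x, w)).card ≤
        (G.degree x - 1) * (k - G.degree x - 1) := by
    refine (Finset.card_biUnion_le_card_mul _ _ (k - G.degree x - 1) fun w hw => ?_).trans_eq ?_
    · have hxw : G.Adj x w := (mem_neighborFinset _ _ _).1 (Finset.mem_of_mem_erase hw)
      rw [Sym2.eq_swap, hdeg_erase hxw.symm]
      have := hθ w hxw
      omega
    · rw [Finset.card_erase_of_mem ((mem_neighborFinset _ _ _).2 hxy),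
        card_neighborFinset_eq_degree]
  calc (edgesNear G x y).card
      ≤ (G.degree x - 1) + (G.degree x - 1) * (k - G.degree x - 1) :=
        (Finset.card_union_le _ _).trans (add_le_add (hdeg_erase hxy).le hfar)
    _ = (G.degree x - 1) * (k - G.degree x) := by
        obtain ⟨m, hm⟩ : ∃ m, k - G.degree x = m + 1 := ⟨k - G.degree x - 1, by omega⟩
        rw [hm, Nat.add_sub_cancel]
        ring

theorem card_seenEdges_le {k : ℕ} (hθ : ∀ u w, G.Adj u w → G.degree u + G.degree w ≤ k)
    {x y : V} (hxy : G.Adj x y) :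
    (seenEdges G s(x, y)).card ≤
      (G.degree x - 1) * (k - G.degree x) + (G.degree y - 1) * (k - G.degree y) :=
  calc (seenEdges G s(x, y)).card ≤ (edgesNear G x y ∪ edgesNear G y x).card :=
        Finset.card_le_card seenEdges_subset_edgesNear
    _ ≤ _ := (Finset.card_union_le _ _).trans
        (add_le_add (card_edgesNear_le (hθ x) hxy) (card_edgesNear_le (hθ y) hxy.symm))

end Counting

theorem pred_mul_eight_sub_add_le {a b : ℕ} (ha : a = 1 ∨ a = 2 ∨ a = 6 ∨ a = 7)
    (hab : a + b ≤ 8) : (a - 1) * (8 - a) + (b - 1) * (8 - b) ≤ 18 := by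
  have hb : b ≤ 7 := by omega
  rcases ha with rfl | rfl | rfl | rfl <;> interval_cases b <;> omega

/-- A minimal counterexample with θ ≤ 8, χ'ₛ > 20 has no vertex of degree 1, 2, 6 or 7. -/
theorem stmt7 [Fintype V] (H : SimpleGraph V) [DecidableRel H.Adj]
    (hore : ∀ u w, H.Adj u w → H.degree u + H.degree w ≤ 8)
    (hnc : ¬ HasStrongColoring H 20)
    (hmin : ∀ v, HasStrongColoring (DelV H v) 20) :
    ∀ v, H.degree v ≠ 1 ∧ H.degree v ≠ 2 ∧ H.degree v ≠ 6 ∧ H.degree v ≠ 7 := by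
  classical
  intro v
  suffices ¬ (H.degree v = 1 ∨ H.degree v = 2 ∨ H.degree v = 6 ∨ H.degree v = 7) by omega
  intro hv
  refine hnc (HasStrongColoring.of_delV (fun e he => ?_) (hmin v))
  obtain ⟨u, rfl⟩ := Sym2.mem_iff_exists.1 he.2
  have hvu : H.Adj v u := he.1
  calc (seenEdges H s(v, u)).card
      ≤ (H.degree v - 1) * (8 - H.degree v) + (H.degree u - 1) * (8 - H.degree u) :=
        card_seenEdges_le hore hvu
    _ ≤ 18 := pred_mul_eight_sub_add_le hv (hore v u hvu)
    _ < 20 := by norm_num
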